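/- arXiv:math/0611349 — 5 statements merged into one kernel-verified Lean document; each statement's English description precedes it below -/
import Mathlib

section
/- Let A be a C*-algebra, M and N Hilbert A-modules, T : M → N a bounded A-linear map. Suppose the graph G(T) is an orthogonal summand of M ⊕ N, i.e. M ⊕ N = G(T) ⊕ G(T)^⊥. Then T is adjointable: there exists a bounded A-linear map T* : N → M with ⟨T x, y⟩ = ⟨x, T* y⟩ for all x ∈ M, y ∈ N. -/
/-!
Write `⟪a, x⟫_T = ⟪a, x⟫ + ⟪T a, T x⟫` for the inner product of `G(T)` pulled back to `M`.
Projecting `(m, y)` onto `G(T)` gives an `a` with `⟪m, x⟫ + ⟪y, T x⟫ = ⟪a, x⟫_T` for all `x`, and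
such an `a` is unique. Taking `y = 0`, resp. `m = 0`, yields bounded `A`-linear maps `R` and `B`
(morally `(1 + T* T)⁻¹` and `(1 + T* T)⁻¹ T*`) with `R` self-adjoint and `⟪T (R m), y⟫ = ⟪m, B y⟫`.
Cauchy–Schwarz in `A`, together with the spectral bound `‖b‖² + K ‖b‖ ≤ ‖b * b + K • b‖` for
`b ≥ 0`, gives `‖m - R m‖² (1 + ‖T‖²) ≤ ‖T‖² ‖m‖²`. Hence `‖1 - R‖ < 1`, `R` is invertible, and
`T* = R⁻¹ B`.
-/

open scoped RightActions InnerProductSpace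
open WithCStarModule

section CStarAlgebra

variable {A : Type*} [NonUnitalCStarAlgebra A] [PartialOrder A] [StarOrderedRing A]

/-- `‖b‖` lies in the spectrum of `b`, so `‖b‖ ^ 2 + K * ‖b‖` lies in that of `b * b + K • b`. -/
lemma norm_sq_add_mul_norm_le_norm {b : A} (hb : 0 ≤ b) (K : ℝ) :
    ‖b‖ ^ 2 + K * ‖b‖ ≤ ‖b * b + K • b‖ := by
  let B := Unitization ℂ A
  have hb' : (0 : B) ≤ (b : B) := by rwa [Unitization.inr_nonneg_iff]
  have hcfc : cfc (fun s : ℝ => s * s + K * s) (b : B) = (b : B) * (b : B) + K • (b : B) := by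
    rw [cfc_add _ _ _ (by fun_prop) (by fun_prop), cfc_mul _ _ _ (by fun_prop) (by fun_prop),
      cfc_const_mul _ _ _ (by fun_prop), cfc_id' ℝ (b : B)]
  have hmem : ‖b‖ * ‖b‖ + K * ‖b‖ ∈ spectrum ℝ ((b : B) * (b : B) + K • (b : B)) := by
    rw [← hcfc, cfc_map_spectrum (fun s : ℝ => s * s + K * s) (b : B),
      ← Unitization.norm_inr (𝕜 := ℂ)]
    exact ⟨_, CStarAlgebra.norm_mem_spectrum_of_nonneg hb', rfl⟩
  calc ‖b‖ ^ 2 + K * ‖b‖ ≤ ‖‖b‖ * ‖b‖ + K * ‖b‖‖ := by rw [sq]; exact Real.le_norm_self _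
    _ ≤ ‖(b : B) * (b : B) + K • (b : B)‖ := spectrum.norm_le_norm_of_mem hmem
    _ = ‖b * b + K • b‖ := by
      rw [← Unitization.inr_mul, ← Unitization.inr_smul, ← Unitization.inr_add,
        Unitization.norm_inr]

lemma norm_sq_add_mul_norm_le_mul_norm {b d : A} (hb : 0 ≤ b) {K : ℝ} (hK : 0 ≤ K)
    (h : b * b + K • b ≤ K • d) : ‖b‖ ^ 2 + K * ‖b‖ ≤ K * ‖d‖ := by
  have hpos : 0 ≤ b * b + K • b := by
    refine add_nonneg ?_ (smul_nonneg hK hb)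
    simpa [hb.isSelfAdjoint.star_eq] using star_mul_self_nonneg b
  calc ‖b‖ ^ 2 + K * ‖b‖ ≤ ‖b * b + K • b‖ := norm_sq_add_mul_norm_le_norm hb K
    _ ≤ ‖K • d‖ := CStarAlgebra.norm_le_norm_of_nonneg_of_le hpos h
    _ = K * ‖d‖ := by rw [norm_smul, Real.norm_of_nonneg hK]

end CStarAlgebra

section GraphInner

variable {A : Type*} [NonUnitalCStarAlgebra A] [PartialOrder A]
  {M : Type*} [NormedAddCommGroup M] [NormedSpace ℂ M] [SMul A M] [CStarModule A M]
  {N : Type*} [NormedAddCommGroup N] [NormedSpace ℂ N] [SMul A N] [CStarModule A N]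
  (T : M →L[ℂ] N)

variable (A) in
/-- The inner product of the graph `G(T)`, transported to `M` along `x ↦ (x, T x)`. -/
def graphInner (x y : M) : A := ⟪x, y⟫_A + ⟪T x, T y⟫_A

lemma star_graphInner (x y : M) : star (graphInner A T x y) = graphInner A T y x := by
  simp [graphInner]

lemma graphInner_add_left (x x' y : M) :
    graphInner A T (x + x') y = graphInner A T x y + graphInner A T x' y := by
  simp only [graphInner, map_add, CStarModule.inner_add_left]; abel

lemma graphInner_sub_left (x x' y : M) :
    graphInner A T (x - x') y = graphInner A T x y - graphInner A T x' y := by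
  simp only [graphInner, map_sub, CStarModule.inner_sub_left]; abel

lemma graphInner_smul_left (c : ℂ) (x y : M) :
    graphInner A T (c • x) y = star c • graphInner A T x y := by
  simp [graphInner, smul_add]

lemma graphInner_op_smul_left (hT : ∀ (a : A) (x : M), T (a • x) = a • T x) (a : A) (x y : M) :
    graphInner A T (a • x) y = graphInner A T x y * star a := by
  simp [graphInner, hT, add_mul]

lemma inner_eq_star_of_graphInner_repr {R : M → M}
    (hR : ∀ m x, ⟪m, x⟫_A = graphInner A T (R m) x)
    {φ : M → A} {v : M} (hv : ∀ x, φ x = graphInner A T v x) (m : M) :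
    ⟪m, v⟫_A = star (φ (R m)) := by
  rw [hv, star_graphInner, hR]

variable [StarOrderedRing A]

lemma graphInner_self_nonneg (x : M) : 0 ≤ graphInner A T x x :=
  add_nonneg CStarModule.inner_self_nonneg CStarModule.inner_self_nonneg

lemma norm_sq_le_norm_graphInner_self (x : M) : ‖x‖ ^ 2 ≤ ‖graphInner A T x x‖ := by
  rw [CStarModule.norm_sq_eq A]
  exact CStarAlgebra.norm_le_norm_of_nonneg_of_le CStarModule.inner_self_nonneg
    (le_add_of_nonneg_right CStarModule.inner_self_nonneg)

lemma eq_of_forall_graphInner_eq {x x' : M}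
    (h : ∀ y, graphInner A T x y = graphInner A T x' y) : x = x' := by
  have h0 : graphInner A T (x - x') (x - x') = 0 := by rw [graphInner_sub_left, h, sub_self]
  have hle := norm_sq_le_norm_graphInner_self (A := A) T (x - x')
  rw [h0, norm_zero] at hle
  exact sub_eq_zero.mp <| norm_eq_zero.mp <| pow_eq_zero_iff two_ne_zero |>.mp <|
    le_antisymm hle (sq_nonneg _)

/-- Projecting `(m, y)` onto `G(T)` gives `(a, T a)` with `(m - a, y - T a) ⊥ G(T)`. -/
lemma exists_graphInner_repr
    (hsumm : ∀ p : C⋆ᵐᵒᵈ(A, M × N), ∃ g z : C⋆ᵐᵒᵈ(A, M × N),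
      (equiv A (M × N) g).2 = T (equiv A (M × N) g).1 ∧
      (∀ g' : C⋆ᵐᵒᵈ(A, M × N),
        (equiv A (M × N) g').2 = T (equiv A (M × N) g').1 → ⟪z, g'⟫_A = 0) ∧
      p = g + z)
    (m : M) (y : N) : ∃ a, ∀ x, ⟪m, x⟫_A + ⟪y, T x⟫_A = graphInner A T a x := by
  obtain ⟨g, z, hg, hz, hp⟩ := hsumm ((equiv A (M × N)).symm (m, y))
  refine ⟨g.1, fun x => ?_⟩
  have horth := hz ((equiv A (M × N)).symm (x, T x)) rfl
  rw [eq_sub_of_add_eq' hp.symm, prod_inner] at horth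
  simp only [sub_fst, sub_snd, equiv_symm_fst, equiv_symm_snd, equiv_fst, equiv_snd] at horth hg
  rw [graphInner, ← hg, ← sub_eq_zero, ← horth]
  simp only [CStarModule.inner_sub_left]
  abel

lemma exists_clm_graphInner_repr (hT : ∀ (a : A) (x : M), T (a • x) = a • T x)
    {F : Type*} [NormedAddCommGroup F] [NormedSpace ℂ F] [SMul A F]
    (B : F →L⋆[ℂ] M →L[ℂ] A) (hB : ∀ (a : A) u x, B (a • u) x = B u x * star a)
    (hrepr : ∀ u, ∃ v, ∀ x, B u x = graphInner A T v x) :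
    ∃ R : F →L[ℂ] M, (∀ (a : A) u, R (a • u) = a • R u) ∧
      ∀ u x, B u x = graphInner A T (R u) x := by
  choose R hR using hrepr
  have hR_unique : ∀ u v, (∀ x, B u x = graphInner A T v x) → R u = v := fun u v hv =>
    eq_of_forall_graphInner_eq T fun x => by rw [← hR, hv]
  let Rₗ : F →ₗ[ℂ] M :=
    { toFun := R
      map_add' := fun u v => hR_unique _ _ fun x => by
        rw [map_add, FunLike.coe_add, Pi.add_apply, hR, hR, graphInner_add_left]
      map_smul' := fun c u => hR_unique _ _ fun x => by
        rw [map_smulₛₗ, FunLike.coe_smul, Pi.smul_apply, hR, RingHom.id_apply,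
          graphInner_smul_left, starRingEnd_apply] }
  have hbound : ∀ u, ‖R u‖ ≤ ‖B‖ * ‖u‖ := fun u => by
    have hsq : ‖R u‖ ^ 2 ≤ ‖B‖ * ‖u‖ * ‖R u‖ := by
      calc ‖R u‖ ^ 2 ≤ ‖graphInner A T (R u) (R u)‖ := norm_sq_le_norm_graphInner_self T _
        _ = ‖B u (R u)‖ := by rw [hR]
        _ ≤ ‖B‖ * ‖u‖ * ‖R u‖ := B.le_opNorm₂ u (R u)
    nlinarith [mul_nonneg (norm_nonneg B) (norm_nonneg u), norm_nonneg (R u)]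
  refine ⟨Rₗ.mkContinuous ‖B‖ hbound, fun a u => hR_unique _ _ fun x => ?_, hR⟩
  rw [hB, hR, graphInner_op_smul_left T hT]
  rfl

lemma exists_clm_inner_eq_graphInner (hT : ∀ (a : A) (x : M), T (a • x) = a • T x)
    (hrepr : ∀ (m : M) (y : N), ∃ a, ∀ x, ⟪m, x⟫_A + ⟪y, T x⟫_A = graphInner A T a x) :
    ∃ R : M →L[ℂ] M, (∀ (a : A) m, R (a • m) = a • R m) ∧
      ∀ m x, ⟪m, x⟫_A = graphInner A T (R m) x :=
  exists_clm_graphInner_repr T hT CStarModule.innerSL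
    (fun _ _ _ => CStarModule.inner_op_smul_left)
    fun m => by simpa [CStarModule.innerSL_apply] using hrepr m 0

lemma exists_clm_inner_apply_eq_graphInner (hT : ∀ (a : A) (x : M), T (a • x) = a • T x)
    (hrepr : ∀ (m : M) (y : N), ∃ a, ∀ x, ⟪m, x⟫_A + ⟪y, T x⟫_A = graphInner A T a x) :
    ∃ B : N →L[ℂ] M, (∀ (a : A) y, B (a • y) = a • B y) ∧
      ∀ y x, ⟪y, T x⟫_A = graphInner A T (B y) x :=
  exists_clm_graphInner_repr T hT
    (((ContinuousLinearMap.compL ℂ M N A).flip T).comp CStarModule.innerSL)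
    (fun _ _ _ => CStarModule.inner_op_smul_left)
    fun y => by simpa [CStarModule.innerSL_apply] using hrepr 0 y

/-- With `w = m - R m`, one has `⟪w, x⟫ = ⟪T (R m), T x⟫`; Cauchy–Schwarz for `T w` and `T (R m)`
then bounds `⟪w, w⟫ * ⟪w, w⟫` by `‖T w‖ ^ 2 • ⟪w, R m⟫`. -/
lemma inner_self_mul_inner_self_add_smul_le {R : M → M}
    (hR : ∀ m x, ⟪m, x⟫_A = graphInner A T (R m) x) (m : M) :
    ⟪m - R m, m - R m⟫_A * ⟪m - R m, m - R m⟫_A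
        + (‖T‖ ^ 2 * ‖m - R m‖ ^ 2) • ⟪m - R m, m - R m⟫_A
      ≤ (‖T‖ ^ 2 * ‖m - R m‖ ^ 2) • ⟪m, m⟫_A := by
  set w := m - R m with hw_def
  set K := ‖T‖ ^ 2 * ‖w‖ ^ 2
  have hK : 0 ≤ K := by positivity
  have hw : ∀ x, ⟪w, x⟫_A = ⟪T (R m), T x⟫_A := fun x => by
    rw [CStarModule.inner_sub_left, hR m x, graphInner, add_sub_cancel_left]
  have hwR : 0 ≤ ⟪w, R m⟫_A := hw (R m) ▸ CStarModule.inner_self_nonneg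
  have hCS : ⟪w, w⟫_A * ⟪w, w⟫_A ≤ K • ⟪w, R m⟫_A := by
    have h := CStarModule.inner_mul_inner_swap_le (A := A) (x := T w) (y := T (R m))
    rw [← CStarModule.star_inner, ← hw, CStarModule.isSelfAdjoint_inner_self.star_eq,
      ← hw] at h
    refine h.trans (smul_le_smul_of_nonneg_right ?_ (hw (R m) ▸ hwR))
    calc ‖T w‖ ^ 2 ≤ (‖T‖ * ‖w‖) ^ 2 := by gcongr; exact T.le_opNorm w
      _ = K := mul_pow _ _ _
  have hwm : ⟪w, m⟫_A ≤ ⟪m, m⟫_A := by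
    rw [← sub_nonneg, ← CStarModule.inner_sub_left, hw_def, sub_sub_cancel,
      ← CStarModule.star_inner, hR, star_graphInner]
    exact graphInner_self_nonneg T (R m)
  calc ⟪w, w⟫_A * ⟪w, w⟫_A + K • ⟪w, w⟫_A ≤ K • ⟪w, R m⟫_A + K • ⟪w, w⟫_A := by gcongr
    _ = K • ⟪w, m⟫_A := by
      rw [← smul_add, ← CStarModule.inner_add_right, hw_def, add_sub_cancel]
    _ ≤ K • ⟪m, m⟫_A := smul_le_smul_of_nonneg_left hwm hK

lemma norm_sub_sq_mul_le {R : M → M} (hR : ∀ m x, ⟪m, x⟫_A = graphInner A T (R m) x) (m : M) :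
    ‖m - R m‖ ^ 2 * (1 + ‖T‖ ^ 2) ≤ ‖T‖ ^ 2 * ‖m‖ ^ 2 := by
  have h := norm_sq_add_mul_norm_le_mul_norm CStarModule.inner_self_nonneg (by positivity)
    (inner_self_mul_inner_self_add_smul_le T hR m)
  rw [← CStarModule.norm_sq_eq A, ← CStarModule.norm_sq_eq A] at h
  rcases (sq_nonneg ‖m - R m‖).eq_or_lt with ht | ht
  · rw [← ht, zero_mul]; positivity
  · exact le_of_mul_le_mul_left (by linarith) ht

lemma isUnit_of_graphInner_repr [CompleteSpace M] {R : M →L[ℂ] M}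
    (hR : ∀ m x, ⟪m, x⟫_A = graphInner A T (R m) x) : IsUnit R := by
  set Q := ‖T‖ ^ 2
  have hbound : ‖1 - R‖ ≤ √(Q / (1 + Q)) := by
    refine ContinuousLinearMap.opNorm_le_bound _ (Real.sqrt_nonneg _) fun m => ?_
    rw [← Real.sqrt_sq (norm_nonneg _), ← Real.sqrt_sq (norm_nonneg m),
      ← Real.sqrt_mul' _ (sq_nonneg _)]
    gcongr
    rw [div_mul_eq_mul_div, le_div_iff₀ (by positivity)]
    exact norm_sub_sq_mul_le T hR m
  have hlt : √(Q / (1 + Q)) < 1 := by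
    rw [Real.sqrt_lt' one_pos, one_pow, div_lt_one (by positivity)]
    linarith
  simpa using isUnit_one_sub_of_norm_lt_one (hbound.trans_lt hlt)

end GraphInner

theorem stmt_3_general {A : Type*} [NonUnitalCStarAlgebra A] [PartialOrder A] [StarOrderedRing A]
    {M : Type*} [NormedAddCommGroup M] [NormedSpace ℂ M] [SMul A M] [CStarModule A M]
    [CompleteSpace M]
    {N : Type*} [NormedAddCommGroup N] [NormedSpace ℂ N] [SMul A N] [CStarModule A N]
    (T : M →L[ℂ] N)
    (hT : ∀ (a : A) (x : M), T (a • x) = a • T x)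
    (hsumm : ∀ p : C⋆ᵐᵒᵈ(A, M × N), ∃ g z : C⋆ᵐᵒᵈ(A, M × N),
      (equiv A (M × N) g).2 = T (equiv A (M × N) g).1 ∧
      (∀ g' : C⋆ᵐᵒᵈ(A, M × N),
        (equiv A (M × N) g').2 = T (equiv A (M × N) g').1 → ⟪z, g'⟫_A = 0) ∧
      p = g + z) :
    ∃ S : N →L[ℂ] M,
      (∀ (a : A) (y : N), S (a • y) = a • S y) ∧
      ∀ (x : M) (y : N), ⟪T x, y⟫_A = ⟪x, S y⟫_A := by
  have hrepr := exists_graphInner_repr T hsumm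
  obtain ⟨R, hR_smul, hR⟩ := exists_clm_inner_eq_graphInner T hT hrepr
  obtain ⟨B, hB_smul, hB⟩ := exists_clm_inner_apply_eq_graphInner T hT hrepr
  obtain ⟨W, hW⟩ := isUnit_of_graphInner_repr T hR
  set R' : M →L[ℂ] M := ↑W⁻¹
  have hRR' : ∀ v, R (R' v) = v := fun v => by rw [← hW]; exact congr($(W.mul_inv) v)
  have hR'R : ∀ v, R' (R v) = v := fun v => by rw [← hW]; exact congr($(W.inv_mul) v)
  have hR_symm : ∀ m m', ⟪R m, m'⟫_A = ⟪m, R m'⟫_A := fun m m' => by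
    rw [inner_eq_star_of_graphInner_repr T hR (hR m') m, CStarModule.star_inner]
  refine ⟨R'.comp B, fun a y => ?_, fun x y => ?_⟩
  · calc R' (B (a • y)) = R' (R (a • R' (B y))) := by rw [hB_smul, hR_smul, hRR']
      _ = a • R' (B y) := hR'R _
  · calc ⟪T x, y⟫_A = ⟪T (R (R' x)), y⟫_A := by rw [hRR']
      _ = ⟪R' x, B y⟫_A := by
        rw [inner_eq_star_of_graphInner_repr T hR (hB y) _, CStarModule.star_inner]
      _ = ⟪R' x, R (R' (B y))⟫_A := by rw [hRR']
      _ = ⟪x, R' (B y)⟫_A := by rw [← hR_symm, hRR']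

/-- If the graph of a bounded `A`-linear map `T : M → N` between Hilbert C*-modules is an
orthogonal summand of `M ⊕ N`, then `T` is adjointable: there is a bounded `A`-linear map
`S = T* : N → M` with `⟪Tx, y⟫ = ⟪x, Sy⟫` for all `x, y`. -/
theorem stmt_3 {A : Type*} [NonUnitalCStarAlgebra A] [PartialOrder A] [StarOrderedRing A]
    {M : Type*} [NormedAddCommGroup M] [NormedSpace ℂ M] [SMul A M] [CStarModule A M]
    [CompleteSpace M]
    {N : Type*} [NormedAddCommGroup N] [NormedSpace ℂ N] [SMul A N] [CStarModule A N]
    [CompleteSpace N]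
    (T : M →L[ℂ] N)
    (hT : ∀ (a : A) (x : M), T (a • x) = a • T x)
    (hsumm : ∀ p : C⋆ᵐᵒᵈ(A, M × N), ∃ g z : C⋆ᵐᵒᵈ(A, M × N),
      (equiv A (M × N) g).2 = T (equiv A (M × N) g).1 ∧
      (∀ g' : C⋆ᵐᵒᵈ(A, M × N),
        (equiv A (M × N) g').2 = T (equiv A (M × N) g').1 → ⟪z, g'⟫_A = 0) ∧
      p = g + z) :
    ∃ S : N →L[ℂ] M,
      (∀ (a : A) (y : N), S (a • y) = a • S y) ∧
      ∀ (x : M) (y : N), ⟪T x, y⟫_A = ⟪x, S y⟫_A :=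
  stmt_3_general T hT hsumm
end

section
/- Let A be a unital C*-algebra and p ∈ A a positive element. Suppose there exist constants 0 < C₁ ≤ C₂ such that C₁‖a‖ ≤ ‖a p‖ ≤ C₂‖a‖ for every a ∈ A. Then the spectrum of p is contained in the interval [C₁, C₂]; in particular p is invertible in A. -/
/-- Let `p ≥ 0` in a unital C*-algebra `A`. If `C₁‖a‖ ≤ ‖a p‖ ≤ C₂‖a‖` for all `a ∈ A`
with `0 < C₁ ≤ C₂`, then the spectrum of `p` lies in `[C₁, C₂]`; in particular `p` is
invertible. -/
theorem stmt_5 {A : Type*} [CStarAlgebra A] [PartialOrder A] [StarOrderedRing A]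
    (p : A) (hp : 0 ≤ p) (C₁ C₂ : ℝ) (hC₁ : 0 < C₁) (hC : C₁ ≤ C₂)
    (hbound : ∀ a : A, C₁ * ‖a‖ ≤ ‖a * p‖ ∧ ‖a * p‖ ≤ C₂ * ‖a‖) :
    spectrum ℝ p ⊆ Set.Icc C₁ C₂ ∧ IsUnit p := by
  have hsa : IsSelfAdjoint p := IsSelfAdjoint.of_nonneg hp
  rcases subsingleton_or_nontrivial A with hA | hA
  · refine ⟨fun x hx ↦ ?_, ?_⟩
    · rw [spectrum.mem_iff] at hx
      exact absurd (isUnit_of_subsingleton _) hx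
    · exact isUnit_of_subsingleton p
  have hpnorm : ‖p‖ ≤ C₂ := by
    have h := (hbound 1).2
    simpa using h
  have hsub : spectrum ℝ p ⊆ Set.Icc C₁ C₂ := by
    intro x hx
    have hx0 : (0 : ℝ) ≤ x := spectrum_nonneg_of_nonneg hp hx
    refine ⟨?_, ?_⟩
    · -- lower bound
      refine le_of_forall_pos_le_add fun ε hε ↦ ?_
      set g : ℝ → ℝ := fun t => max 0 (1 - |t - x| / ε) with hg
      have hgc : Continuous g := by fun_prop
      have hg0 : ∀ t, 0 ≤ g t := fun t => le_max_left _ _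
      have hg1 : ∀ t, g t ≤ 1 := by
        intro t
        simp only [hg, max_le_iff]
        constructor
        · linarith
        · have : 0 ≤ |t - x| / ε := div_nonneg (abs_nonneg _) hε.le
          linarith
      have hgx : g x = 1 := by simp [hg]
      have a := cfc g p
      have h1 : (1 : ℝ) ≤ ‖cfc g p‖ := by
        have := norm_apply_le_norm_cfc g p hx (by fun_prop) hsa
        rw [hgx] at this
        simpa using this
      have hmul : cfc g p * p = cfc (fun t => g t * t) p := by
        nth_rw 2 [← cfc_id' ℝ p hsa]
        rw [← cfc_mul g (fun x => x) p (by fun_prop) (by fun_prop)]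
      have h2 : ‖cfc (fun t => g t * t) p‖ ≤ x + ε := by
        apply norm_cfc_le (by linarith)
        intro t ht
        have ht0 : (0 : ℝ) ≤ t := spectrum_nonneg_of_nonneg hp ht
        rw [Real.norm_eq_abs, abs_of_nonneg (mul_nonneg (hg0 t) ht0)]
        rcases le_or_gt (g t) 0 with h | h
        · have : g t = 0 := le_antisymm h (hg0 t)
          simp [this]; linarith
        · have habs : |t - x| < ε := by
            by_contra hcon
            push_neg at hcon
            have : (1 : ℝ) ≤ |t - x| / ε := (one_le_div hε).mpr hcon
            have : g t = 0 := by
              simp only [hg, max_eq_left_iff]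
              linarith
            linarith
          have htle : t ≤ x + ε := by
            have := abs_lt.mp habs
            linarith [this.2]
          calc g t * t ≤ 1 * t := mul_le_mul_of_nonneg_right (hg1 t) ht0
            _ = t := one_mul t
            _ ≤ x + ε := htle
      have h3 := (hbound (cfc g p)).1
      rw [hmul] at h3
      calc C₁ = C₁ * 1 := (mul_one _).symm
        _ ≤ C₁ * ‖cfc g p‖ := by nlinarith
        _ ≤ x + ε := h3.trans h2
    · exact (Real.le_norm_self x).trans ((spectrum.norm_le_norm_of_mem hx).trans hpnorm)
  refine ⟨hsub, spectrum.isUnit_of_zero_notMem (R := ℝ) fun h0 ↦ ?_⟩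
  have := (hsub h0).1
  linarith
end

section
/- Let A be a C*-algebra, M a Hilbert A-module, and x₁, …, xₙ ∈ M a normalized tight frame, i.e. x = Σᵢ ⟨x, xᵢ⟩ xᵢ for every x ∈ M. Let N be a Hilbert A-module and ψ : M → N an A-linear (not assumed continuous) map. Then ψ is bounded, with ‖ψ(x)‖ ≤ (Σᵢ ‖xᵢ‖^{1/2} ‖ψ(xᵢ)‖^{1/2}) ‖x‖^{1/2} ‖ψ(x)‖^{1/2} for all x, hence ‖ψ(x)‖ ≤ (Σᵢ ‖xᵢ‖^{1/2} ‖ψ(xᵢ)‖^{1/2})² ‖x‖. -/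
open scoped RightActions InnerProductSpace

/-!
Expanding `x = ∑ᵢ eᵢ ⟨eᵢ, x⟩` and using `A`-linearity, `ψ x = ∑ᵢ ψ(eᵢ) ⟨eᵢ, x⟩`. Cauchy–Schwarz,
`‖⟨eᵢ, x⟩‖ ≤ ‖eᵢ‖ ‖x‖`, together with `‖y a‖ ≤ ‖y‖ ‖a‖` gives
`‖ψ x‖ ≤ (∑ᵢ ‖eᵢ‖ ‖ψ eᵢ‖) ‖x‖ ≤ C² ‖x‖` for `C = ∑ᵢ ‖eᵢ‖^{1/2} ‖ψ eᵢ‖^{1/2}`, and the square root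
of `‖ψ x‖² ≤ C² ‖x‖ ‖ψ x‖` is the first estimate.
-/

/-- The Hilbert C⋆-module class as it stood in Mathlib (Dec 2024): a complex module `E` with a
right `A`-action (`SMul Aᵐᵒᵖ E`) and an inner product with `⟪x, y <• a⟫ = ⟪x, y⟫ * a`.
Mathlib's current `CStarModule` uses a left action with `⟪x, a • y⟫ = a * ⟪x, y⟫` instead. -/
class CStarModuleRight (A : outParam <| Type*) (E : Type*) [NonUnitalSemiring A] [StarRing A]
    [Module ℂ A] [AddCommGroup E] [Module ℂ E] [PartialOrder A] [SMul Aᵐᵒᵖ E] [Norm A] [Norm E]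
    extends Inner A E where
  inner_add_right {x} {y} {z} : inner x (y + z) = inner x y + inner x z
  inner_self_nonneg {x} : 0 ≤ inner x x
  inner_self {x} : inner x x = 0 ↔ x = 0
  inner_op_smul_right {a : A} {x y : E} : inner x (y <• a) = inner x y * a
  inner_smul_right_complex {z : ℂ} {x} {y} : inner x (z • y) = z • inner x y
  star_inner x y : star (inner x y) = inner y x
  norm_eq_sqrt_norm_inner_self x : ‖x‖ = √‖inner x x‖

namespace CStarModule

variable {A E : Type*} [NonUnitalCStarAlgebra A] [PartialOrder A] [StarOrderedRing A]
  [AddCommGroup E] [Module ℂ E] [SMul A E] [Norm E] [CStarModule A E]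

lemma norm_smul_le (a : A) (y : E) : ‖a • y‖ ≤ ‖a‖ * ‖y‖ := by
  have h : ‖a • y‖ ^ 2 ≤ ‖a • y‖ * (‖a‖ * ‖y‖) :=
    calc ‖a • y‖ ^ 2 = ‖a * ⟪a • y, y⟫_A‖ := by rw [norm_sq_eq A, inner_op_smul_right]
      _ ≤ ‖a‖ * (‖a • y‖ * ‖y‖) := (norm_mul_le _ _).trans (by gcongr; exact norm_inner_le E)
      _ = ‖a • y‖ * (‖a‖ * ‖y‖) := by ring
  nlinarith [mul_nonneg (norm_nonneg a) (CStarModule.norm_nonneg A (x := y))]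

end CStarModule

namespace CStarModuleRight

variable {A E : Type*} [NonUnitalCStarAlgebra A] [PartialOrder A] [StarOrderedRing A]
  [AddCommGroup E] [Module ℂ E] [SMul Aᵐᵒᵖ E] [Norm E] [CStarModuleRight A E]

/-- A right Hilbert `A`-module is a left Hilbert `Aᵐᵒᵖ`-module, so the results on `CStarModule`
apply to it. -/
instance toCStarModuleMulOpposite : CStarModule Aᵐᵒᵖ E where
  inner x y := MulOpposite.op ⟪x, y⟫_A
  inner_add_right := congrArg MulOpposite.op inner_add_right
  inner_self_nonneg := inner_self_nonneg (A := A)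
  inner_self := MulOpposite.op_eq_zero_iff _ |>.trans inner_self
  inner_op_smul_right {a x y} := by
    rw [← MulOpposite.op_unop a, inner_op_smul_right, MulOpposite.op_mul]
  inner_smul_right_complex := congrArg MulOpposite.op inner_smul_right_complex
  star_inner x y := congrArg MulOpposite.op (star_inner x y)
  norm_eq_sqrt_norm_inner_self := norm_eq_sqrt_norm_inner_self (A := A)

lemma norm_inner_le (x y : E) : ‖⟪x, y⟫_A‖ ≤ ‖x‖ * ‖y‖ :=
  CStarModule.norm_inner_le (A := Aᵐᵒᵖ) E

lemma norm_op_smul_le (y : E) (a : A) : ‖y <• a‖ ≤ ‖y‖ * ‖a‖ :=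
  (CStarModule.norm_smul_le (MulOpposite.op a) y).trans_eq (mul_comm _ _)

end CStarModuleRight

section TightFrame

variable {A : Type*} [NonUnitalCStarAlgebra A] [PartialOrder A] [StarOrderedRing A]
  {M N : Type*} [AddCommGroup M] [Module ℂ M] [SMul Aᵐᵒᵖ M] [Norm M] [CStarModuleRight A M]
  [SeminormedAddCommGroup N] [Module ℂ N] [SMul Aᵐᵒᵖ N] [CStarModuleRight A N]
  {ι : Type*} [Fintype ι]

variable (A) in
def IsNormalizedTightFrame (e : ι → M) : Prop := ∀ x : M, x = ∑ i, e i <• ⟪e i, x⟫_A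

theorem IsNormalizedTightFrame.norm_map_le {e : ι → M} (he : IsNormalizedTightFrame A e)
    (ψ : M →+ N) (hψ : ∀ (a : A) (x : M), ψ (x <• a) = ψ x <• a) (x : M) :
    ‖ψ x‖ ≤ (∑ i, ‖e i‖ * ‖ψ (e i)‖) * ‖x‖ :=
  calc ‖ψ x‖ = ‖∑ i, ψ (e i) <• ⟪e i, x⟫_A‖ := by
        conv_lhs => rw [he x]
        simp only [map_sum, hψ]
    _ ≤ ∑ i, ‖ψ (e i)‖ * ‖⟪e i, x⟫_A‖ :=
        norm_sum_le_of_le _ fun i _ => CStarModuleRight.norm_op_smul_le _ _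
    _ ≤ ∑ i, ‖ψ (e i)‖ * (‖e i‖ * ‖x‖) := by
        gcongr with i; exact CStarModuleRight.norm_inner_le _ _
    _ = (∑ i, ‖e i‖ * ‖ψ (e i)‖) * ‖x‖ := by
        rw [Finset.sum_mul]; exact Finset.sum_congr rfl fun i _ => by ring

end TightFrame

theorem Finset.sum_mul_le_sq_sum_sqrt_mul_sqrt {ι : Type*} (s : Finset ι) {f g : ι → ℝ}
    (hf : ∀ i ∈ s, 0 ≤ f i) (hg : ∀ i ∈ s, 0 ≤ g i) :
    ∑ i ∈ s, f i * g i ≤ (∑ i ∈ s, √(f i) * √(g i)) ^ 2 :=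
  calc ∑ i ∈ s, f i * g i = ∑ i ∈ s, (√(f i) * √(g i)) ^ 2 :=
        Finset.sum_congr rfl fun i hi => by
          rw [mul_pow, Real.sq_sqrt (hf i hi), Real.sq_sqrt (hg i hi)]
    _ ≤ (∑ i ∈ s, √(f i) * √(g i)) ^ 2 :=
        Finset.sum_sq_le_sq_sum_of_nonneg fun i _ => by positivity

theorem Real.le_mul_sqrt_mul_sqrt_of_le_sq_mul {u t C : ℝ} (hC : 0 ≤ C) (hu : 0 ≤ u)
    (h : u ≤ C ^ 2 * t) : u ≤ C * √t * √u := by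
  have hsqrt : √u ≤ C * √t := (Real.sqrt_le_sqrt h).trans_eq <| by
    rw [Real.sqrt_mul (sq_nonneg C), Real.sqrt_sq hC]
  calc u = √u * √u := (Real.mul_self_sqrt hu).symm
    _ ≤ C * √t * √u := by gcongr

theorem stmt_6_general {A : Type*} [NonUnitalCStarAlgebra A] [PartialOrder A] [StarOrderedRing A]
    {M : Type*} [NormedAddCommGroup M] [NormedSpace ℂ M] [SMul Aᵐᵒᵖ M] [CStarModuleRight A M]
    {N : Type*} [NormedAddCommGroup N] [NormedSpace ℂ N] [SMul Aᵐᵒᵖ N] [CStarModuleRight A N]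
    {n : ℕ} (e : Fin n → M)
    (hframe : ∀ x : M, x = ∑ i, e i <• (⟪e i, x⟫_A))
    (ψ : M →ₗ[ℂ] N)
    (hψ : ∀ (a : A) (x : M), ψ (x <• a) = ψ x <• a) :
    (∀ x : M, ‖ψ x‖ ≤
        (∑ i, Real.sqrt ‖e i‖ * Real.sqrt ‖ψ (e i)‖) *
          Real.sqrt ‖x‖ * Real.sqrt ‖ψ x‖) ∧
    (∀ x : M, ‖ψ x‖ ≤ (∑ i, Real.sqrt ‖e i‖ * Real.sqrt ‖ψ (e i)‖) ^ 2 * ‖x‖) := by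
  set C := ∑ i, √‖e i‖ * √‖ψ (e i)‖
  have hbound (x : M) : ‖ψ x‖ ≤ C ^ 2 * ‖x‖ :=
    calc ‖ψ x‖ ≤ (∑ i, ‖e i‖ * ‖ψ (e i)‖) * ‖x‖ :=
          IsNormalizedTightFrame.norm_map_le hframe ψ.toAddMonoidHom hψ x
      _ ≤ C ^ 2 * ‖x‖ := by
          gcongr
          exact Finset.sum_mul_le_sq_sum_sqrt_mul_sqrt _ (fun i _ => norm_nonneg _)
            (fun i _ => norm_nonneg _)
  have hC : 0 ≤ C := Finset.sum_nonneg fun i _ => by positivity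
  exact ⟨fun x => Real.le_mul_sqrt_mul_sqrt_of_le_sq_mul hC (norm_nonneg _) (hbound x), hbound⟩

/-- If `x₁, …, xₙ` is a normalized tight frame of a Hilbert C*-module `M` (i.e.
`x = Σᵢ ⟨x, xᵢ⟩ xᵢ` for all `x`) and `ψ : M → N` is an `A`-linear (not assumed continuous)
map into a Hilbert C*-module `N`, then
`‖ψ(x)‖ ≤ (Σᵢ ‖xᵢ‖^{1/2} ‖ψ(xᵢ)‖^{1/2}) ‖x‖^{1/2} ‖ψ(x)‖^{1/2}` for all `x`, and hence
`‖ψ(x)‖ ≤ (Σᵢ ‖xᵢ‖^{1/2} ‖ψ(xᵢ)‖^{1/2})² ‖x‖`; in particular `ψ` is bounded. -/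
theorem stmt_6 {A : Type*} [NonUnitalCStarAlgebra A] [PartialOrder A] [StarOrderedRing A]
    {M : Type*} [NormedAddCommGroup M] [NormedSpace ℂ M] [SMul Aᵐᵒᵖ M] [CStarModuleRight A M]
    [CompleteSpace M]
    {N : Type*} [NormedAddCommGroup N] [NormedSpace ℂ N] [SMul Aᵐᵒᵖ N] [CStarModuleRight A N]
    [CompleteSpace N]
    {n : ℕ} (e : Fin n → M)
    (hframe : ∀ x : M, x = ∑ i, e i <• (⟪e i, x⟫_A))
    (ψ : M →ₗ[ℂ] N)
    (hψ : ∀ (a : A) (x : M), ψ (x <• a) = ψ x <• a) :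
    (∀ x : M, ‖ψ x‖ ≤
        (∑ i, Real.sqrt ‖e i‖ * Real.sqrt ‖ψ (e i)‖) *
          Real.sqrt ‖x‖ * Real.sqrt ‖ψ x‖) ∧
    (∀ x : M, ‖ψ x‖ ≤ (∑ i, Real.sqrt ‖e i‖ * Real.sqrt ‖ψ (e i)‖) ^ 2 * ‖x‖) :=
  stmt_6_general e hframe ψ hψ
end

section
/- Let A be a C*-algebra, M a Hilbert A-module, and (m₁, m₂, …) a sequence in M. The map φ : ℓ²(A) → M, φ((a₁, a₂, …)) = Σₙ aₙ mₙ, defines a bounded A-module map if and only if the matrix (⟨mᵢ, mⱼ⟩)ᵢⱼ is bounded in M_∞(A), i.e. supₙ ‖(⟨mᵢ, mⱼ⟩)ᵢ,ⱼ=1ⁿ‖ < ∞; and in that case ‖φ‖² equals sup over n of ‖(⟨mᵢ,mⱼ⟩)ᵢ,ⱼ=1ⁿ‖ (i.e. ‖φ‖ = ‖(⟨mᵢ,mⱼ⟩)‖^{1/2} in the paper's normalization). -/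
open scoped RightActions InnerProductSpace
open WithCStarModule

variable {A : Type*} [CStarAlgebra A] [PartialOrder A] [StarOrderedRing A]

/-- The December 2024 Mathlib `CStarModule` (right Hilbert module, `SMul Aᵐᵒᵖ E`, inner product
`A`-linear on the right: `⟪x, y <• a⟫ = ⟪x, y⟫ * a`). Current Mathlib's `CStarModule` uses the
opposite (left-module) convention, so the old notion is restated here. -/
class RightCStarModule (A : outParam Type*) (E : Type*) [NonUnitalSemiring A] [StarRing A]
    [Module ℂ A] [AddCommGroup E] [Module ℂ E] [PartialOrder A] [SMul Aᵐᵒᵖ E] [Norm A] [Norm E]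
    extends Inner A E where
  inner_add_right {x} {y} {z} : inner x (y + z) = inner x y + inner x z
  inner_self_nonneg {x} : 0 ≤ inner x x
  inner_self {x} : inner x x = 0 ↔ x = 0
  inner_op_smul_right {a : A} {x y : E} : inner x (y <• a) = inner x y * a
  inner_smul_right_complex {z : ℂ} {x} {y} : inner x (z • y) = z • inner x y
  star_inner x y : star (inner x y) = inner y x
  norm_eq_sqrt_norm_inner_self x : ‖x‖ = √‖inner x x‖

/-- The old norm of `C⋆ᵐᵒᵈ (Fin n → A)`: `‖x‖ = √‖∑ i, star (x i) * x i‖`. -/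
noncomputable def oldPiCStarNorm (n : ℕ) (x : Fin n → A) : ℝ :=
  √‖∑ i, star (x i) * x i‖

/-- The canonical C*-norm on `Mₙ(A)`: the operator norm of the matrix acting on the
standard Hilbert `A`-module `Aⁿ`. -/
noncomputable def matCStarNorm (n : ℕ) (P : Matrix (Fin n) (Fin n) A) : ℝ :=
  sSup {r : ℝ | ∃ v : Fin n → A, oldPiCStarNorm n v ≤ 1 ∧
    r = oldPiCStarNorm n (fun i => ∑ j, P i j * v j)}

/-!
Write `φ a = ∑ i, mᵢ <• aᵢ` and `G` for the Gram matrix `(⟪mᵢ, mⱼ⟫)` acting on `Aᵏ`. Expanding the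
inner product gives `⟪φ a, φ b⟫ = ∑ i, aᵢ* (G b)ᵢ`. Hence `‖φ a‖² = ‖∑ i, aᵢ* (G a)ᵢ‖ ≤ ‖a‖ ‖G a‖`,
so `‖G‖ ≤ C²` forces `‖φ‖ ≤ C`; conversely `‖G a‖² = ‖⟪φ (G a), φ a⟫‖ ≤ ‖φ‖² ‖G a‖ ‖a‖` by the
Cauchy–Schwarz inequality in `M`, so `‖φ‖ ≤ C` forces `‖G‖ ≤ C²`. Both conditions are therefore
equivalent for each `k`, and taking all `k` at once gives the theorem.
-/

namespace RightCStarModule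

variable {E : Type*} [NormedAddCommGroup E] [NormedSpace ℂ E] [SMul Aᵐᵒᵖ E] [RightCStarModule A E]

section Algebra

omit [StarOrderedRing A]

def innerAddHom (x : E) : E →+ A :=
  AddMonoidHom.mk' (fun y => ⟪x, y⟫_A) fun _ _ => inner_add_right

lemma inner_sub_right (x y z : E) : ⟪x, y - z⟫_A = ⟪x, y⟫_A - ⟪x, z⟫_A :=
  map_sub (innerAddHom x) y z

lemma inner_zero_left (y : E) : ⟪0, y⟫_A = 0 := by
  rw [← star_inner, show ⟪y, 0⟫_A = 0 from map_zero (innerAddHom y), star_zero]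

lemma inner_sub_left (x y z : E) : ⟪x - y, z⟫_A = ⟪x, z⟫_A - ⟪y, z⟫_A := by
  rw [← star_inner, inner_sub_right, star_sub, star_inner, star_inner]

lemma inner_sum_right {ι : Type*} (s : Finset ι) (x : E) (y : ι → E) :
    ⟪x, ∑ i ∈ s, y i⟫_A = ∑ i ∈ s, ⟪x, y i⟫_A :=
  map_sum (innerAddHom x) y s

lemma inner_sum_left {ι : Type*} (s : Finset ι) (x : ι → E) (y : E) :
    ⟪∑ i ∈ s, x i, y⟫_A = ∑ i ∈ s, ⟪x i, y⟫_A := by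
  rw [← star_inner, inner_sum_right, star_sum]
  simp only [star_inner]

lemma inner_op_smul_left (a : A) (x y : E) : ⟪x <• a, y⟫_A = star a * ⟪x, y⟫_A := by
  rw [← star_inner, inner_op_smul_right, star_mul, star_inner]

lemma inner_smul_right_real (r : ℝ) (x y : E) : ⟪x, r • y⟫_A = r • ⟪x, y⟫_A := by
  rw [RCLike.real_smul_eq_coe_smul (K := ℂ) r y, inner_smul_right_complex,
    ← RCLike.real_smul_eq_coe_smul]

lemma inner_smul_left_real (r : ℝ) (x y : E) : ⟪r • x, y⟫_A = r • ⟪x, y⟫_A := by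
  rw [← star_inner, inner_smul_right_real, star_smul, star_trivial, star_inner]

lemma norm_sq_eq (x : E) : ‖x‖ ^ 2 = ‖⟪x, x⟫_A‖ := by
  rw [norm_eq_sqrt_norm_inner_self (A := A) x, Real.sq_sqrt (norm_nonneg _)]

end Algebra

lemma star_inner_mul_inner_le (x y : E) :
    star ⟪x, y⟫_A * ⟪x, y⟫_A ≤ ‖x‖ ^ 2 • ⟪y, y⟫_A := by
  set s := ‖x‖ ^ 2
  set a := ⟪x, y⟫_A
  rcases (sq_nonneg ‖x‖).eq_or_lt with hs | hs
  · have hx : x = 0 := inner_self.mp (norm_eq_zero.mp (by rw [← norm_sq_eq, ← hs]))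
    simp [s, a, hx, inner_zero_left]
  · have hexpand : ⟪x <• a - s • y, x <• a - s • y⟫_A =
        star a * ⟪x, x⟫_A * a - s • (star a * a) - s • (star a * a) + s • s • ⟪y, y⟫_A := by
      simp only [inner_sub_left, inner_sub_right, inner_op_smul_left, inner_op_smul_right,
        inner_smul_left_real, inner_smul_right_real, ← star_inner x y]
      simp only [sub_mul, smul_sub, mul_assoc, smul_mul_assoc]
      abel
    have hconj : star a * ⟪x, x⟫_A * a ≤ s • (star a * a) := by
      rw [show s = ‖⟪x, x⟫_A‖ from norm_sq_eq x]
      exact CStarAlgebra.star_left_conjugate_le_norm_smul (star_inner x x)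
    have key : s • (star a * a) ≤ s • s • ⟪y, y⟫_A := by
      have h0 := (inner_self_nonneg (x := x <• a - s • y)).trans_eq hexpand
      have h1 : (0 : A) ≤ s • (star a * a) - s • (star a * a) - s • (star a * a)
          + s • s • ⟪y, y⟫_A := h0.trans (by gcongr)
      rw [← sub_nonneg]
      convert h1 using 1
      abel
    exact (smul_le_smul_iff_of_pos_left hs).mp key

lemma norm_inner_le (x y : E) : ‖⟪x, y⟫_A‖ ≤ ‖x‖ * ‖y‖ := by
  have hsq : ‖⟪x, y⟫_A‖ ^ 2 ≤ (‖x‖ * ‖y‖) ^ 2 :=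
    calc ‖⟪x, y⟫_A‖ ^ 2 = ‖star ⟪x, y⟫_A * ⟪x, y⟫_A‖ := by
          rw [CStarRing.norm_star_mul_self, pow_two]
      _ ≤ ‖‖x‖ ^ 2 • ⟪y, y⟫_A‖ :=
          CStarAlgebra.norm_le_norm_of_nonneg_of_le (star_mul_self_nonneg _)
            (star_inner_mul_inner_le x y)
      _ = (‖x‖ * ‖y‖) ^ 2 := by
          rw [norm_smul, Real.norm_of_nonneg (sq_nonneg _), ← norm_sq_eq y, mul_pow]
  exact (pow_le_pow_iff_left₀ (norm_nonneg _) (by positivity) two_ne_zero).mp hsq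

end RightCStarModule

open scoped Matrix

section OldPiCStarNorm

variable {n : ℕ}

section

omit [PartialOrder A] [StarOrderedRing A]

lemma oldPiCStarNorm_nonneg (a : Fin n → A) : 0 ≤ oldPiCStarNorm n a :=
  Real.sqrt_nonneg _

lemma oldPiCStarNorm_sq (a : Fin n → A) :
    oldPiCStarNorm n a ^ 2 = ‖∑ i, star (a i) * a i‖ :=
  Real.sq_sqrt (norm_nonneg _)

lemma oldPiCStarNorm_zero : oldPiCStarNorm n (0 : Fin n → A) = 0 := by
  simp [oldPiCStarNorm]

end

/-- Mathlib's `C⋆ᵐᵒᵈ(A, Fin n → A)` has `⟪x, y⟫ = ∑ i, y i * star (x i)`, so `star` turns its norm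
into `oldPiCStarNorm`. -/
noncomputable def toCStarMod (a : Fin n → A) : C⋆ᵐᵒᵈ(A, Fin n → A) :=
  (WithCStarModule.equiv A (Fin n → A)).symm (star a)

lemma norm_toCStarMod (a : Fin n → A) : ‖toCStarMod a‖ = oldPiCStarNorm n a := by
  simp [pi_norm, toCStarMod, oldPiCStarNorm, inner_def]

lemma oldPiCStarNorm_smul (z : ℂ) (a : Fin n → A) :
    oldPiCStarNorm n (z • a) = ‖z‖ * oldPiCStarNorm n a := by
  rw [← norm_toCStarMod, ← norm_toCStarMod, toCStarMod, star_smul, equiv_symm_smul, norm_smul,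
    norm_star, toCStarMod]

lemma norm_sum_star_mul_le (a b : Fin n → A) :
    ‖∑ i, star (a i) * b i‖ ≤ oldPiCStarNorm n a * oldPiCStarNorm n b := by
  have h : ⟪toCStarMod a, toCStarMod b⟫_A = star (∑ i, star (a i) * b i) := by
    simp [pi_inner, toCStarMod, inner_def, star_sum]
  rw [← norm_toCStarMod, ← norm_toCStarMod, ← norm_star, ← h]
  exact CStarModule.norm_inner_le _

lemma norm_apply_le_oldPiCStarNorm (a : Fin n → A) (j : Fin n) : ‖a j‖ ≤ oldPiCStarNorm n a := by
  rw [← norm_toCStarMod, ← norm_star (a j)]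
  exact norm_apply_le_norm (toCStarMod a) j

lemma oldPiCStarNorm_le_sum_norm (a : Fin n → A) : oldPiCStarNorm n a ≤ ∑ i, ‖a i‖ := by
  rw [← norm_toCStarMod]
  refine (pi_norm_le_sum_norm (toCStarMod a)).trans_eq (Finset.sum_congr rfl fun i _ => ?_)
  exact norm_star (a i)

lemma oldPiCStarNorm_pos {a : Fin n → A} (ha : a ≠ 0) : 0 < oldPiCStarNorm n a := by
  rw [← norm_toCStarMod, norm_pos_iff]
  exact fun h => ha (by simpa [toCStarMod] using congrArg (WithCStarModule.equiv A (Fin n → A)) h)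

end OldPiCStarNorm

section MatCStarNorm

variable {n : ℕ} (P : Matrix (Fin n) (Fin n) A)

lemma bddAbove_oldPiCStarNorm_mulVec :
    BddAbove {r : ℝ | ∃ v, oldPiCStarNorm n v ≤ 1 ∧ r = oldPiCStarNorm n (P *ᵥ v)} := by
  refine ⟨∑ i, ∑ j, ‖P i j‖, ?_⟩
  rintro r ⟨v, hv, rfl⟩
  refine (oldPiCStarNorm_le_sum_norm _).trans (Finset.sum_le_sum fun i _ => ?_)
  show ‖∑ j, P i j * v j‖ ≤ _
  refine (norm_sum_le _ _).trans (Finset.sum_le_sum fun j _ => ?_)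
  calc ‖P i j * v j‖ ≤ ‖P i j‖ * ‖v j‖ := norm_mul_le _ _
    _ ≤ ‖P i j‖ := mul_le_of_le_one_right (norm_nonneg _)
        ((norm_apply_le_oldPiCStarNorm v j).trans hv)

lemma oldPiCStarNorm_mulVec_le (v : Fin n → A) :
    oldPiCStarNorm n (P *ᵥ v) ≤ matCStarNorm n P * oldPiCStarNorm n v := by
  rcases eq_or_ne v 0 with rfl | hv
  · simp [oldPiCStarNorm_zero]
  set t := oldPiCStarNorm n v
  have ht : 0 < t := oldPiCStarNorm_pos hv
  have hunit : oldPiCStarNorm n ((t⁻¹ : ℂ) • v) ≤ 1 := by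
    rw [oldPiCStarNorm_smul, norm_inv, Complex.norm_real, Real.norm_of_nonneg ht.le,
      inv_mul_cancel₀ ht.ne']
  have hle : oldPiCStarNorm n (P *ᵥ ((t⁻¹ : ℂ) • v)) ≤ matCStarNorm n P :=
    le_csSup (bddAbove_oldPiCStarNorm_mulVec P) ⟨_, hunit, rfl⟩
  rwa [Matrix.mulVec_smul, oldPiCStarNorm_smul, norm_inv, Complex.norm_real,
    Real.norm_of_nonneg ht.le, inv_mul_le_iff₀ ht, mul_comm] at hle

lemma matCStarNorm_le_iff {c : ℝ} (hc : 0 ≤ c) :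
    matCStarNorm n P ≤ c ↔ ∀ v, oldPiCStarNorm n (P *ᵥ v) ≤ c * oldPiCStarNorm n v := by
  refine ⟨fun h v => (oldPiCStarNorm_mulVec_le P v).trans
    (mul_le_mul_of_nonneg_right h (oldPiCStarNorm_nonneg v)), fun h => ?_⟩
  refine csSup_le ⟨_, 0, by simp [oldPiCStarNorm_zero], rfl⟩ ?_
  rintro r ⟨v, hv, rfl⟩
  exact (h v).trans (mul_le_of_le_one_right hc hv)

end MatCStarNorm

section Gram

open RightCStarModule

variable {E : Type*} [NormedAddCommGroup E] [NormedSpace ℂ E] [SMul Aᵐᵒᵖ E] [RightCStarModule A E]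
  {n : ℕ}

def gram (v : Fin n → E) : Matrix (Fin n) (Fin n) A :=
  Matrix.of fun i j => ⟪v i, v j⟫_A

section

omit [StarOrderedRing A]

lemma inner_sum_op_smul (v : Fin n → E) (a b : Fin n → A) :
    ⟪∑ i, v i <• a i, ∑ j, v j <• b j⟫_A = ∑ i, star (a i) * (gram v *ᵥ b) i := by
  rw [inner_sum_left]
  refine Finset.sum_congr rfl fun i _ => ?_
  rw [inner_op_smul_left, inner_sum_right]
  simp only [inner_op_smul_right]
  rfl

end

lemma oldPiCStarNorm_gram_mulVec_le {v : Fin n → E} {C : ℝ} (hC : 0 ≤ C)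
    (hφ : ∀ a : Fin n → A, ‖∑ i, v i <• a i‖ ≤ C * oldPiCStarNorm n a) (a : Fin n → A) :
    oldPiCStarNorm n (gram v *ᵥ a) ≤ C ^ 2 * oldPiCStarNorm n a := by
  set b := gram v *ᵥ a
  have hb := oldPiCStarNorm_nonneg b
  have hsq : oldPiCStarNorm n b * oldPiCStarNorm n b
      ≤ (C ^ 2 * oldPiCStarNorm n a) * oldPiCStarNorm n b :=
    calc oldPiCStarNorm n b * oldPiCStarNorm n b
        = ‖⟪∑ i, v i <• b i, ∑ j, v j <• a j⟫_A‖ := by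
          rw [← pow_two, oldPiCStarNorm_sq, inner_sum_op_smul]
      _ ≤ ‖∑ i, v i <• b i‖ * ‖∑ j, v j <• a j‖ := norm_inner_le _ _
      _ ≤ (C * oldPiCStarNorm n b) * (C * oldPiCStarNorm n a) :=
          mul_le_mul (hφ b) (hφ a) (norm_nonneg _) (by positivity)
      _ = (C ^ 2 * oldPiCStarNorm n a) * oldPiCStarNorm n b := by ring
  rcases hb.eq_or_lt with hb0 | hbpos
  · rw [← hb0]; have := oldPiCStarNorm_nonneg a; positivity
  · exact le_of_mul_le_mul_right hsq hbpos

lemma norm_sum_op_smul_le_of_gram {v : Fin n → E} {C : ℝ} (hC : 0 ≤ C)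
    (hG : ∀ a : Fin n → A, oldPiCStarNorm n (gram v *ᵥ a) ≤ C ^ 2 * oldPiCStarNorm n a)
    (a : Fin n → A) :
    ‖∑ i, v i <• a i‖ ≤ C * oldPiCStarNorm n a := by
  have hsq : ‖∑ i, v i <• a i‖ ^ 2 ≤ (C * oldPiCStarNorm n a) ^ 2 :=
    calc ‖∑ i, v i <• a i‖ ^ 2 = ‖∑ i, star (a i) * (gram v *ᵥ a) i‖ := by
          rw [norm_sq_eq, inner_sum_op_smul]
      _ ≤ oldPiCStarNorm n a * oldPiCStarNorm n (gram v *ᵥ a) := norm_sum_star_mul_le _ _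
      _ ≤ oldPiCStarNorm n a * (C ^ 2 * oldPiCStarNorm n a) :=
          mul_le_mul_of_nonneg_left (hG a) (oldPiCStarNorm_nonneg a)
      _ = (C * oldPiCStarNorm n a) ^ 2 := by ring
  have := oldPiCStarNorm_nonneg a
  exact (pow_le_pow_iff_left₀ (norm_nonneg _) (by positivity) two_ne_zero).mp hsq

lemma norm_sum_op_smul_le_iff_matCStarNorm_gram_le (v : Fin n → E) {C : ℝ} (hC : 0 ≤ C) :
    (∀ a : Fin n → A, ‖∑ i, v i <• a i‖ ≤ C * oldPiCStarNorm n a) ↔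
      matCStarNorm n (gram v) ≤ C ^ 2 := by
  rw [matCStarNorm_le_iff _ (sq_nonneg C)]
  exact ⟨oldPiCStarNorm_gram_mulVec_le hC, norm_sum_op_smul_le_of_gram hC⟩

end Gram

theorem stmt_14_general
    {M : Type*} [NormedAddCommGroup M] [NormedSpace ℂ M] [SMul Aᵐᵒᵖ M] [RightCStarModule A M]
    (m : ℕ → M) :
    ((∃ C : ℝ, 0 ≤ C ∧ ∀ (k : ℕ) (a : Fin k → A),
        ‖∑ i, m i <• a i‖ ≤ C * oldPiCStarNorm k a) ↔
      BddAbove {r : ℝ | ∃ k : ℕ,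
        r = matCStarNorm k (Matrix.of fun i j : Fin k => ⟪m (i : ℕ), m (j : ℕ)⟫_A)}) ∧
    (∀ C : ℝ, 0 ≤ C →
      ((∀ (k : ℕ) (a : Fin k → A),
          ‖∑ i, m i <• a i‖ ≤ C * oldPiCStarNorm k a) ↔
        (∀ r ∈ {r : ℝ | ∃ k : ℕ,
            r = matCStarNorm k (Matrix.of fun i j : Fin k => ⟪m (i : ℕ), m (j : ℕ)⟫_A)},
          r ≤ C ^ 2))) := by
  have hbound (C : ℝ) (hC : 0 ≤ C) :
      (∀ (k : ℕ) (a : Fin k → A), ‖∑ i, m i <• a i‖ ≤ C * oldPiCStarNorm k a) ↔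
        ∀ k, matCStarNorm k (gram fun i : Fin k => m i) ≤ C ^ 2 :=
    forall_congr' fun k => norm_sum_op_smul_le_iff_matCStarNorm_gram_le (fun i : Fin k => m i) hC
  refine ⟨⟨fun ⟨C, hC, hφ⟩ => ⟨C ^ 2, ?_⟩, fun ⟨B, hB⟩ => ⟨√(max B 0), Real.sqrt_nonneg _, ?_⟩⟩,
    fun C hC => (hbound C hC).trans ⟨?_, ?_⟩⟩
  · rintro r ⟨k, rfl⟩
    exact (hbound C hC).mp hφ k
  · refine (hbound _ (Real.sqrt_nonneg _)).mpr fun k => ?_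
    rw [Real.sq_sqrt (le_max_right B 0)]
    exact (hB ⟨k, rfl⟩).trans (le_max_left B 0)
  · rintro h r ⟨k, rfl⟩
    exact h k
  · exact fun h k => h _ ⟨k, rfl⟩

/-- Given a sequence `(m₁, m₂, …)` in a Hilbert C*-module `M`, the map
`φ : ℓ²(A) → M, φ((a₁, a₂, …)) = Σₙ aₙ mₙ` defines a bounded `A`-module map (equivalently,
the densely defined map is bounded on all finitely supported tuples) if and only if the
matrix `(⟨mᵢ, mⱼ⟩)` is bounded, i.e. `supₙ ‖(⟨mᵢ, mⱼ⟩)_{i,j=1}^n‖ < ∞`; moreover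
`‖φ‖² = supₙ ‖(⟨mᵢ, mⱼ⟩)_{i,j=1}^n‖`. -/
theorem stmt_14
    {M : Type*} [NormedAddCommGroup M] [NormedSpace ℂ M] [SMul Aᵐᵒᵖ M] [RightCStarModule A M]
    [CompleteSpace M]
    (m : ℕ → M) :
    ((∃ C : ℝ, 0 ≤ C ∧ ∀ (k : ℕ) (a : Fin k → A),
        ‖∑ i, m i <• a i‖ ≤ C * oldPiCStarNorm k a) ↔
      BddAbove {r : ℝ | ∃ k : ℕ,
        r = matCStarNorm k (Matrix.of fun i j : Fin k => ⟪m (i : ℕ), m (j : ℕ)⟫_A)}) ∧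
    (∀ C : ℝ, 0 ≤ C →
      ((∀ (k : ℕ) (a : Fin k → A),
          ‖∑ i, m i <• a i‖ ≤ C * oldPiCStarNorm k a) ↔
        (∀ r ∈ {r : ℝ | ∃ k : ℕ,
            r = matCStarNorm k (Matrix.of fun i j : Fin k => ⟪m (i : ℕ), m (j : ℕ)⟫_A)},
          r ≤ C ^ 2))) :=
  stmt_14_general m
end

section
/- Let A be a unital C*-algebra and E a full Hilbert A-module, i.e. the closed linear span of {⟨x,y⟩ : x,y ∈ E} equals A. Then there exist n ∈ ℕ and elements e₁, …, eₙ ∈ E with Σ_{i=1}^n ⟨eᵢ, eᵢ⟩ = 1_A; consequently the map φ : A → Eⁿ, φ(a) = (a e₁, …, a eₙ), is an isometric A-module map (⟨φ(a), φ(b)⟩ = a b*). -/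
/-! Approximate `1` by an element `t` of the span of the inner products with `‖1 - t‖ < 1`, so
that `t + t⋆` is strictly positive. Writing `t = Σ ⟪xᵢ, yᵢ⟫` (scalars absorbed into the `xᵢ`),
`⟪x + y, x + y⟫ - (⟪x, y⟫ + ⟪x, y⟫⋆) = ⟪x, x⟫ + ⟪y, y⟫ ≥ 0` shows that `s = Σ ⟪zᵢ, zᵢ⟫` with
`zᵢ = xᵢ + yᵢ` dominates `t + t⋆`, hence is strictly positive. Then `eᵢ = zᵢ s^(-1/2)` satisfies
`Σ ⟪eᵢ, eᵢ⟫ = s^(-1/2) s s^(-1/2) = 1`, and `⟪φ a, φ b⟫ = a⋆ (Σ ⟪eᵢ, eᵢ⟫) b = a⋆ b`. -/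

open scoped RightActions InnerProductSpace
open WithCStarModule

/-- The notion `CStarModule` as it stood in the older Mathlib (right modules, with an action of
`Aᵐᵒᵖ`, inner product `A`-linear on the right); Mathlib's `CStarModule` now means a left module. -/
class OldCStarModule (A E : Type*) [NonUnitalSemiring A] [StarRing A]
    [Module ℂ A] [AddCommGroup E] [Module ℂ E] [PartialOrder A] [SMul Aᵐᵒᵖ E] [Norm A] [Norm E]
    extends Inner A E where
  inner_add_right {x} {y} {z} : inner x (y + z) = inner x y + inner x z
  inner_self_nonneg {x} : 0 ≤ inner x x
  inner_self {x} : inner x x = 0 ↔ x = 0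
  inner_op_smul_right {a : A} {x y : E} : inner x (y <• a) = inner x y * a
  inner_smul_right_complex {z : ℂ} {x} {y} : inner x (z • y) = z • inner x y
  star_inner x y : star (inner x y) = inner y x
  norm_eq_sqrt_norm_inner_self x : ‖x‖ = √‖inner x x‖

/-- The old `A`-valued inner product on the finite product `C⋆ᵐᵒᵈ (Π i, E i)`. -/
instance OldCStarModule.piInner {A : Type*} [NonUnitalSemiring A] [StarRing A] [Module ℂ A]
    [PartialOrder A] [Norm A] {ι : Type*} [Fintype ι] {E : ι → Type*}
    [∀ i, AddCommGroup (E i)] [∀ i, Module ℂ (E i)] [∀ i, SMul Aᵐᵒᵖ (E i)] [∀ i, Norm (E i)]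
    [∀ i, OldCStarModule A (E i)] : Inner A (WithCStarModule A (Π i, E i)) where
  inner x y := ∑ i, inner A (equiv A _ x i) (equiv A _ y i)

/-- The old norm on the finite product `C⋆ᵐᵒᵈ (Π i, E i)`. -/
noncomputable instance OldCStarModule.piNorm {A : Type*} [NonUnitalSemiring A] [StarRing A]
    [Module ℂ A] [PartialOrder A] [Norm A] {ι : Type*} [Fintype ι] {E : ι → Type*}
    [∀ i, AddCommGroup (E i)] [∀ i, Module ℂ (E i)] [∀ i, SMul Aᵐᵒᵖ (E i)] [∀ i, Norm (E i)]
    [∀ i, OldCStarModule A (E i)] : Norm (WithCStarModule A (Π i, E i)) where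
  norm x := √‖∑ i, inner A (equiv A _ x i) (equiv A _ x i)‖

namespace OldCStarModule

section

variable {A E : Type*} [NonUnitalRing A] [StarRing A] [Module ℂ A] [PartialOrder A] [Norm A]
  [AddCommGroup E] [Module ℂ E] [SMul Aᵐᵒᵖ E] [Norm E] [OldCStarModule A E]

lemma inner_add_left {x y z : E} : ⟪x + y, z⟫_A = ⟪x, z⟫_A + ⟪y, z⟫_A := by
  rw [← star_inner, inner_add_right, star_add, star_inner, star_inner]

lemma inner_smul_left_complex [StarModule ℂ A] {c : ℂ} {x y : E} :
    ⟪c • x, y⟫_A = star c • ⟪x, y⟫_A := by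
  rw [← star_inner, inner_smul_right_complex, star_smul, star_inner]

lemma inner_op_smul_left {a : A} {x y : E} : ⟪x <• a, y⟫_A = star a * ⟪x, y⟫_A := by
  rw [← star_inner, inner_op_smul_right, star_mul, star_inner]

lemma inner_op_smul_op_smul {a b : A} {x y : E} :
    ⟪x <• a, y <• b⟫_A = star a * ⟪x, y⟫_A * b := by
  rw [inner_op_smul_right, inner_op_smul_left]

lemma pi_inner_op_smul {ι : Type*} [Fintype ι] (e : ι → E) (a b : A) :
    ⟪(equiv A (ι → E)).symm (fun i => e i <• a),
      (equiv A (ι → E)).symm (fun i => e i <• b)⟫_A = star a * (∑ i, ⟪e i, e i⟫_A) * b := by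
  change ∑ i, ⟪e i <• a, e i <• b⟫_A = _
  simp only [inner_op_smul_op_smul, Finset.mul_sum, Finset.sum_mul]

lemma pi_norm_eq_sqrt {ι : Type*} [Fintype ι] (x : WithCStarModule A (ι → E)) :
    ‖x‖ = √‖⟪x, x⟫_A‖ :=
  rfl

variable [StarOrderedRing A]

lemma inner_add_star_le_inner_self_add (x y : E) :
    ⟪x, y⟫_A + star ⟪x, y⟫_A ≤ ⟪x + y, x + y⟫_A := by
  have hexpand : ⟪x + y, x + y⟫_A = ⟪x, y⟫_A + star ⟪x, y⟫_A + (⟪x, x⟫_A + ⟪y, y⟫_A) := by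
    rw [inner_add_left, inner_add_right, inner_add_right, star_inner]
    abel
  rw [hexpand]
  exact le_add_of_nonneg_right (add_nonneg inner_self_nonneg inner_self_nonneg)

lemma exists_add_star_le_sum_inner_self [StarModule ℂ A] {t : A}
    (ht : t ∈ Submodule.span ℂ {a : A | ∃ x y : E, a = ⟪x, y⟫_A}) :
    ∃ (n : ℕ) (z : Fin n → E), t + star t ≤ ∑ i, ⟪z i, z i⟫_A := by
  obtain ⟨n, c, g, rfl⟩ := Submodule.mem_span_set'.mp ht
  choose x y hxy using fun i => (g i).2
  have hterm : ∀ i, c i • (g i : A) = ⟪star (c i) • x i, y i⟫_A := fun i => by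
    rw [hxy i, inner_smul_left_complex, star_star]
  refine ⟨n, fun i => star (c i) • x i + y i, ?_⟩
  simp only [hterm, star_sum, ← Finset.sum_add_distrib]
  exact Finset.sum_le_sum fun i _ => inner_add_star_le_inner_self_add _ _

end

end OldCStarModule

lemma isStrictlyPositive_add_star_of_norm_one_sub_lt_one {A : Type*} [CStarAlgebra A]
    [PartialOrder A] [StarOrderedRing A] {t : A} (ht : ‖1 - t‖ < 1) :
    IsStrictlyPositive (t + star t) := by
  set u := 1 - t
  have hu : ‖u + star u‖ < 2 := calc
    ‖u + star u‖ ≤ ‖u‖ + ‖star u‖ := norm_add_le _ _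
    _ < 2 := by rw [norm_star]; linarith
  refine (isStrictlyPositive_algebraMap (sub_pos.mpr hu)).of_le ?_
  calc algebraMap ℝ A (2 - ‖u + star u‖) = algebraMap ℝ A 2 - algebraMap ℝ A ‖u + star u‖ :=
        map_sub _ _ _
    _ ≤ algebraMap ℝ A 2 - (u + star u) :=
        sub_le_sub_left (IsSelfAdjoint.add_star_self u |>.le_algebraMap_norm_self) _
    _ = t + star t := by
        rw [map_ofNat, ← one_add_one_eq_two, star_sub, star_one]
        simp only [u]
        abel

namespace OldCStarModule

variable {A E : Type*} [CStarAlgebra A] [PartialOrder A] [StarOrderedRing A]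
  [AddCommGroup E] [Module ℂ E] [SMul Aᵐᵒᵖ E] [Norm E] [OldCStarModule A E]

theorem exists_sum_inner_self_eq_one
    (hfull : (Submodule.span ℂ {a : A | ∃ x y : E, a = ⟪x, y⟫_A}).topologicalClosure = ⊤) :
    ∃ (n : ℕ) (e : Fin n → E), ∑ i, ⟪e i, e i⟫_A = 1 := by
  have h1 : (1 : A) ∈ closure (Submodule.span ℂ {a : A | ∃ x y : E, a = ⟪x, y⟫_A} : Set A) := by
    rw [← Submodule.topologicalClosure_coe, hfull]
    trivial
  obtain ⟨t, ht, hdist⟩ := Metric.mem_closure_iff.mp h1 1 one_pos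
  obtain ⟨n, z, hle⟩ := exists_add_star_le_sum_inner_self ht
  set s := ∑ i, ⟪z i, z i⟫_A
  have hs : IsStrictlyPositive s :=
    (isStrictlyPositive_add_star_of_norm_one_sub_lt_one (by rwa [← dist_eq_norm])).of_le hle
  refine ⟨n, fun i => z i <• s ^ (-(1 / 2) : ℝ), ?_⟩
  simp only [inner_op_smul_op_smul, ← Finset.mul_sum, ← Finset.sum_mul]
  rw [CFC.rpow_nonneg.isSelfAdjoint.star_eq]
  exact CFC.conjugate_rpow_neg_one_half s

end OldCStarModule

theorem stmt_18_general {A : Type*} [CStarAlgebra A] [PartialOrder A] [StarOrderedRing A]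
    {E : Type*} [NormedAddCommGroup E] [NormedSpace ℂ E] [SMul Aᵐᵒᵖ E] [OldCStarModule A E]
    (hfull : (Submodule.span ℂ {a : A | ∃ x y : E, a = ⟪x, y⟫_A}).topologicalClosure = ⊤) :
    ∃ (n : ℕ) (e : Fin n → E),
      (∑ i, ⟪e i, e i⟫_A) = 1 ∧
      (∀ a b : A,
        ⟪(equiv A (Fin n → E)).symm (fun i => e i <• a),
          (equiv A (Fin n → E)).symm (fun i => e i <• b)⟫_A = star a * b) ∧
      (∀ a : A, ‖(equiv A (Fin n → E)).symm (fun i => e i <• a)‖ = ‖a‖) := by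
  obtain ⟨n, e, he⟩ := OldCStarModule.exists_sum_inner_self_eq_one hfull
  refine ⟨n, e, he, fun a b => by rw [OldCStarModule.pi_inner_op_smul, he, mul_one], fun a => ?_⟩
  rw [OldCStarModule.pi_norm_eq_sqrt, OldCStarModule.pi_inner_op_smul, he, mul_one,
    CStarRing.norm_star_mul_self, Real.sqrt_mul_self (norm_nonneg a)]

/-- Let `A` be a unital C*-algebra and `E` a full Hilbert `A`-module (the closed linear
span of the inner products equals `A`). Then there exist `n ∈ ℕ` and `e₁, …, eₙ ∈ E` with
`Σᵢ ⟨eᵢ, eᵢ⟩ = 1`, and consequently the map `φ : A → Eⁿ`, `φ(a) = (a e₁, …, a eₙ)`, is an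
isometric `A`-module map with `⟨φ(a), φ(b)⟩ = ⟨a, b⟩_A`. -/
theorem stmt_18 {A : Type*} [CStarAlgebra A] [PartialOrder A] [StarOrderedRing A]
    {E : Type*} [NormedAddCommGroup E] [NormedSpace ℂ E] [SMul Aᵐᵒᵖ E] [OldCStarModule A E]
    [CompleteSpace E]
    (hfull : (Submodule.span ℂ {a : A | ∃ x y : E, a = ⟪x, y⟫_A}).topologicalClosure = ⊤) :
    ∃ (n : ℕ) (e : Fin n → E),
      (∑ i, ⟪e i, e i⟫_A) = 1 ∧
      (∀ a b : A,
        ⟪(equiv A (Fin n → E)).symm (fun i => e i <• a),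
          (equiv A (Fin n → E)).symm (fun i => e i <• b)⟫_A = star a * b) ∧
      (∀ a : A, ‖(equiv A (Fin n → E)).symm (fun i => e i <• a)‖ = ‖a‖) :=
  stmt_18_general hfull
end
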